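/- Let S = { (u, v) ∈ ℝ² : |u| < π/2 } and let δE, δF, δG : S → ℝ be smooth functions satisfying on all of S the four equations: (i) (1/2)·∂_u δE = 2·(sin u / cos³u)·δG + (1/cos²u)·∂_u δG; (ii) 2·∂_u δF = ∂_v δE; (iii) ∂_v δF − sin u · cos u · δE − (1/2)·∂_u δG = 0; (iv) (1/(2·cos²u))·∂_v δG = ∂_v δE + 3·tan u · δF. Then at every point of S the function δF satisfies the ordinary differential equation δF = −sin u · cos u · ∂_u δF − (1/2)·cos²u · ∂_u∂_u δF. -/

import Mathlib

open Real

noncomputable section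

/-- Partial derivative in the `u` (first) coordinate. -/
def pdu (f : ℝ × ℝ → ℝ) (x : ℝ × ℝ) : ℝ := fderiv ℝ f x (1, 0)

/-- Partial derivative in the `v` (second) coordinate. -/
def pdv (f : ℝ × ℝ → ℝ) (x : ℝ × ℝ) : ℝ := fderiv ℝ f x (0, 1)

/-!
Eliminating `∂ᵥδE` between `h2` and `h4` gives `∂ᵥδG = 4 cos²u ∂ᵤδF + 6 sin u cos u δF`.
The ODE is then the compatibility condition `∂ᵤ∂ᵥδE = ∂ᵥ∂ᵤδE`: the left side is `2 ∂ᵤ∂ᵤδF`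
by `h2`, the right side is read off from `h1` differentiated in `v`, where `∂ᵥ∂ᵤδG = ∂ᵤ∂ᵥδG`
is known from the formula for `∂ᵥδG`.
-/

open Filter Topology

section PartialDerivatives

variable {f g : ℝ × ℝ → ℝ} {φ : ℝ → ℝ} {φ' : ℝ} {p : ℝ × ℝ}

lemma pdu_congr (h : f =ᶠ[𝓝 p] g) : pdu f p = pdu g p := by
  rw [pdu, pdu, h.fderiv_eq]

lemma pdv_congr (h : f =ᶠ[𝓝 p] g) : pdv f p = pdv g p := by
  rw [pdv, pdv, h.fderiv_eq]

lemma pdu_add (hf : DifferentiableAt ℝ f p) (hg : DifferentiableAt ℝ g p) :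
    pdu (fun q => f q + g q) p = pdu f p + pdu g p := by
  simp [pdu, fderiv_fun_add hf hg]

lemma pdv_add (hf : DifferentiableAt ℝ f p) (hg : DifferentiableAt ℝ g p) :
    pdv (fun q => f q + g q) p = pdv f p + pdv g p := by
  simp [pdv, fderiv_fun_add hf hg]

lemma pdu_const_mul (hf : DifferentiableAt ℝ f p) (c : ℝ) :
    pdu (fun q => c * f q) p = c * pdu f p := by
  simp [pdu, fderiv_const_mul hf]

lemma pdv_const_mul (hf : DifferentiableAt ℝ f p) (c : ℝ) :
    pdv (fun q => c * f q) p = c * pdv f p := by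
  simp [pdv, fderiv_const_mul hf]

lemma hasFDerivAt_comp_fst (hφ : HasDerivAt φ φ' p.1) :
    HasFDerivAt (fun q : ℝ × ℝ => φ q.1) (φ' • ContinuousLinearMap.fst ℝ ℝ ℝ) p :=
  hφ.comp_hasFDerivAt p hasFDerivAt_fst

lemma differentiableAt_fst_mul (hφ : DifferentiableAt ℝ φ p.1) (hf : DifferentiableAt ℝ f p) :
    DifferentiableAt ℝ (fun q => φ q.1 * f q) p :=
  (hφ.comp p differentiableAt_fst).fun_mul hf

lemma pdu_fst_mul (hφ : HasDerivAt φ φ' p.1) (hf : DifferentiableAt ℝ f p) :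
    pdu (fun q => φ q.1 * f q) p = φ' * f p + φ p.1 * pdu f p := by
  rw [pdu, ((hasFDerivAt_comp_fst hφ).fun_mul hf.hasFDerivAt).fderiv]
  simp only [add_apply, smul_apply, smul_eq_mul, ContinuousLinearMap.coe_fst', mul_one, pdu]
  ring

lemma pdv_fst_mul (hφ : DifferentiableAt ℝ φ p.1) (hf : DifferentiableAt ℝ f p) :
    pdv (fun q => φ q.1 * f q) p = φ p.1 * pdv f p := by
  rw [pdv, ((hasFDerivAt_comp_fst hφ.hasDerivAt).fun_mul hf.hasFDerivAt).fderiv]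
  simp [pdv]

lemma differentiableAt_fderiv_apply (hf : ContDiffAt ℝ 2 f p) (w : ℝ × ℝ) :
    DifferentiableAt ℝ (fun q => fderiv ℝ f q w) p :=
  ((hf.fderiv_right (m := 1) (by norm_num)).clm_apply contDiffAt_const).differentiableAt
    one_ne_zero

lemma differentiableAt_pdu (hf : ContDiffAt ℝ 2 f p) : DifferentiableAt ℝ (pdu f) p :=
  differentiableAt_fderiv_apply hf _

lemma fderiv_fderiv_apply_comm (hf : ContDiffAt ℝ 2 f p) (v w : ℝ × ℝ) :
    fderiv ℝ (fun q => fderiv ℝ f q v) p w = fderiv ℝ (fun q => fderiv ℝ f q w) p v := by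
  have hd : DifferentiableAt ℝ (fderiv ℝ f) p :=
    (hf.fderiv_right (m := 1) (by norm_num)).differentiableAt one_ne_zero
  simpa [fderiv_clm_apply hd (differentiableAt_const _)] using
    hf.isSymmSndFDerivAt (by simp [minSmoothness_of_isRCLikeNormedField]) w v

lemma pdu_pdv_comm (hf : ContDiffAt ℝ 2 f p) : pdu (pdv f) p = pdv (pdu f) p :=
  fderiv_fderiv_apply_comm hf _ _

end PartialDerivatives

section Sphere

variable {E F G : ℝ × ℝ → ℝ} {p : ℝ × ℝ}

lemma pdu_eq_of_eventuallyEq_cos_sq_mul_pdu_add (hF : ContDiffAt ℝ 2 F p)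
    (h : ∀ᶠ q in 𝓝 p, G q = 4 * cos q.1 ^ 2 * pdu F q + 6 * (sin q.1 * cos q.1) * F q) :
    pdu G p = 4 * cos p.1 ^ 2 * pdu (pdu F) p - 2 * sin p.1 * cos p.1 * pdu F p
      + 6 * (cos p.1 ^ 2 - sin p.1 ^ 2) * F p := by
  have hcos_sq : HasDerivAt (fun u => 4 * cos u ^ 2) (-8 * sin p.1 * cos p.1) p.1 :=
    (((hasDerivAt_cos p.1).pow 2).const_mul 4).congr_deriv (by ring)
  have hsin_cos :
      HasDerivAt (fun u => 6 * (sin u * cos u)) (6 * (cos p.1 ^ 2 - sin p.1 ^ 2)) p.1 :=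
    (((hasDerivAt_sin p.1).mul (hasDerivAt_cos p.1)).const_mul 6).congr_deriv (by ring)
  have hFu := differentiableAt_pdu hF
  have hFd := hF.differentiableAt two_ne_zero
  rw [pdu_congr h, pdu_add (differentiableAt_fst_mul hcos_sq.differentiableAt hFu)
    (differentiableAt_fst_mul hsin_cos.differentiableAt hFd),
    pdu_fst_mul hcos_sq hFu, pdu_fst_mul hsin_cos hFd]
  ring

lemma half_mul_pdv_pdu_eq_of_eventuallyEq (hE : ContDiffAt ℝ 2 E p) (hG : ContDiffAt ℝ 2 G p)
    (hc : cos p.1 ≠ 0)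
    (h : ∀ᶠ q in 𝓝 p, 1 / 2 * pdu E q =
      2 * (sin q.1 / cos q.1 ^ 3) * G q + 1 / cos q.1 ^ 2 * pdu G q) :
    1 / 2 * pdv (pdu E) p =
      2 * (sin p.1 / cos p.1 ^ 3) * pdv G p + 1 / cos p.1 ^ 2 * pdv (pdu G) p := by
  have ha : DifferentiableAt ℝ (fun u => 2 * (sin u / cos u ^ 3)) p.1 := by
    fun_prop (disch := exact pow_ne_zero _ hc)
  have hb : DifferentiableAt ℝ (fun u => 1 / cos u ^ 2) p.1 := by
    fun_prop (disch := exact pow_ne_zero _ hc)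
  have hGd := hG.differentiableAt two_ne_zero
  have hGu := differentiableAt_pdu hG
  rw [← pdv_const_mul (differentiableAt_pdu hE),
    pdv_congr h, pdv_add (differentiableAt_fst_mul ha hGd) (differentiableAt_fst_mul hb hGu),
    pdv_fst_mul ha hGd, pdv_fst_mul hb hGu]

end Sphere

lemma sphere_ode_of_integrability {u F Fu Fuu Gv Guv Euv : ℝ} (hc : cos u ≠ 0)
    (h2 : 2 * Fuu = Euv)
    (h1 : 1 / 2 * Euv = 2 * (sin u / cos u ^ 3) * Gv + 1 / cos u ^ 2 * Guv)
    (hGv : Gv = 4 * cos u ^ 2 * Fu + 6 * (sin u * cos u) * F)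
    (hGuv : Guv = 4 * cos u ^ 2 * Fuu - 2 * sin u * cos u * Fu
      + 6 * (cos u ^ 2 - sin u ^ 2) * F) :
    F = -(sin u * cos u) * Fu - 1 / 2 * cos u ^ 2 * Fuu := by
  have hFuu : cos u ^ 3 * Fuu = 2 * sin u * Gv + cos u * Guv := by
    rw [← h2] at h1
    field_simp at h1
    linear_combination h1
  apply mul_left_cancel₀ hc
  linear_combination (-1 / 6 : ℝ) * (hFuu + 2 * sin u * hGv + cos u * hGuv
    + 6 * cos u * F * sin_sq_add_cos_sq u)

theorem infinitesimal_beltrami_sphere_ode_general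
    (S : Set (ℝ × ℝ)) (hS : S = {p : ℝ × ℝ | |p.1| < π / 2})
    (δE δF δG : ℝ × ℝ → ℝ)
    (hE : ContDiffOn ℝ (⊤ : ℕ∞) δE S) (hF : ContDiffOn ℝ (⊤ : ℕ∞) δF S)
    (hG : ContDiffOn ℝ (⊤ : ℕ∞) δG S)
    (h1 : ∀ p ∈ S, (1 / 2) * pdu δE p =
      2 * (sin p.1 / cos p.1 ^ 3) * δG p + (1 / cos p.1 ^ 2) * pdu δG p)
    (h2 : ∀ p ∈ S, 2 * pdu δF p = pdv δE p)
    (h4 : ∀ p ∈ S, (1 / (2 * cos p.1 ^ 2)) * pdv δG p =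
      pdv δE p + 3 * tan p.1 * δF p) :
    ∀ p ∈ S, δF p =
      -(sin p.1 * cos p.1) * pdu δF p - (1 / 2) * cos p.1 ^ 2 * pdu (pdu δF) p := by
  subst hS
  have hcos : ∀ q : ℝ × ℝ, |q.1| < π / 2 → cos q.1 ≠ 0 := fun q hq =>
    (cos_pos_of_mem_Ioo (abs_lt.mp hq)).ne'
  have hGv : ∀ q : ℝ × ℝ, |q.1| < π / 2 →
      pdv δG q = 4 * cos q.1 ^ 2 * pdu δF q + 6 * (sin q.1 * cos q.1) * δF q := by
    intro q hq
    have h4q := h4 q hq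
    have hc := hcos q hq
    rw [← h2 q hq, tan_eq_sin_div_cos] at h4q
    field_simp at h4q
    linear_combination h4q
  intro p hp
  have hp_nhds : ∀ᶠ q in 𝓝 p, |q.1| < π / 2 :=
    (isOpen_lt (continuous_abs.comp continuous_fst) continuous_const).mem_nhds hp
  have hC2 : ∀ {f : ℝ × ℝ → ℝ},
      ContDiffOn ℝ (⊤ : ℕ∞) f {q : ℝ × ℝ | |q.1| < π / 2} → ContDiffAt ℝ 2 f p :=
    fun hf => (hf.contDiffAt hp_nhds).of_le (WithTop.coe_le_coe.mpr le_top)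
  refine sphere_ode_of_integrability (Euv := pdv (pdu δE) p) (hcos p hp) ?_ ?_ (hGv p hp)
    (pdu_eq_of_eventuallyEq_cos_sq_mul_pdu_add (hC2 hF) (hp_nhds.mono hGv))
  · rw [← pdu_pdv_comm (hC2 hE), ← pdu_congr (hp_nhds.mono h2),
      pdu_const_mul (differentiableAt_pdu (hC2 hF))]
  · rw [pdu_pdv_comm (hC2 hG)]
    exact half_mul_pdv_pdu_eq_of_eventuallyEq (hC2 hE) (hC2 hG) (hcos p hp) (hp_nhds.mono h1)

/-- The first-order equations of an infinitesimally cogeodesical deformation of the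
round sphere metric `du² + cos²u dv²` imply the second-order ODE
`δF = −sin u cos u ∂ᵤδF − (1/2) cos²u ∂ᵤ∂ᵤδF`. -/
theorem infinitesimal_beltrami_sphere_ode
    (S : Set (ℝ × ℝ)) (hS : S = {p : ℝ × ℝ | |p.1| < π / 2})
    (δE δF δG : ℝ × ℝ → ℝ)
    (hE : ContDiffOn ℝ (⊤ : ℕ∞) δE S) (hF : ContDiffOn ℝ (⊤ : ℕ∞) δF S)
    (hG : ContDiffOn ℝ (⊤ : ℕ∞) δG S)
    (h1 : ∀ p ∈ S, (1 / 2) * pdu δE p =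
      2 * (sin p.1 / cos p.1 ^ 3) * δG p + (1 / cos p.1 ^ 2) * pdu δG p)
    (h2 : ∀ p ∈ S, 2 * pdu δF p = pdv δE p)
    (h3 : ∀ p ∈ S, pdv δF p - sin p.1 * cos p.1 * δE p - (1 / 2) * pdu δG p = 0)
    (h4 : ∀ p ∈ S, (1 / (2 * cos p.1 ^ 2)) * pdv δG p =
      pdv δE p + 3 * tan p.1 * δF p) :
    ∀ p ∈ S, δF p =
      -(sin p.1 * cos p.1) * pdu δF p - (1 / 2) * cos p.1 ^ 2 * pdu (pdu δF) p :=
  infinitesimal_beltrami_sphere_ode_general S hS δE δF δG hE hF hG h1 h2 h4
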